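/- The polynomial Δ(t) = (t⁸ − t⁷ + t⁵ − t⁴ + t³ − t + 1)(2t² − 5t + 2) over ℤ does not admit a factorization of the form ± t^k · f(t) · f(t⁻¹) in ℤ[t, t⁻¹] for any Laurent polynomial f(t) ∈ ℤ[t, t⁻¹] and integer k (the Fox–Milnor condition fails). -/

import Mathlib

/-!
Write `f = t⁻ⁿ p` with `p ∈ ℤ[X]`; then `f(t⁻¹)` is `p.reverse` up to a power of `t`, so up to
powers of `t` a Fox–Milnor polynomial is `± p · p.reverse`. On the unit circle `z⁻¹ = z̄`, hence
`p.reverse(z) = zᵈ · conj (p(z))`: `p` and `p.reverse` vanish together at a root `z` with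
`|z| = 1`, which is therefore at least a double root. A root `ζ` of `t⁸ − t⁷ + ⋯ + 1` is a
15th root of unity, so a simple root of that factor (as `X¹⁵ − 1` is separable) and not a root of
`2t² − 5t + 2 = (2t − 1)(t − 2)`: it is a simple root of `Δ` on the unit circle.
-/

open Polynomial ComplexConjugate
open LaurentPolynomial hiding C

namespace LaurentPolynomial

variable {R : Type*} [CommSemiring R]

theorem exists_mul_invert_eq_T_mul_toLaurent (f : R[T;T⁻¹]) :
    ∃ (p : R[X]) (m : ℤ), f * invert f = T m * toLaurent (p * p.reverse) := by
  obtain ⟨n, p, hp⟩ := f.exists_T_pow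
  have hf : f = toLaurent p * T (-n) := by rw [hp, mul_T_assoc, add_neg_cancel, T_zero, mul_one]
  refine ⟨p, -p.natDegree, ?_⟩
  rw [map_mul, toLaurent_reverse, hf, map_mul, invert_T, neg_neg]
  have hT (m : ℤ) : T (-m) * T m = (1 : R[T;T⁻¹]) := by rw [← T_add, neg_add_cancel, T_zero]
  calc toLaurent p * T (-n) * (invert (toLaurent p) * T n)
      = toLaurent p * invert (toLaurent p) * (T (-n) * T n) := by ring
    _ = toLaurent p * invert (toLaurent p) * (T (-p.natDegree) * T p.natDegree) := by
      rw [hT, hT]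
    _ = T (-p.natDegree) * (toLaurent p * (invert (toLaurent p) * T p.natDegree)) := by ring

theorem exists_X_pow_mul_eq_of_toLaurent_eq {a b : R[X]} {m : ℤ}
    (h : toLaurent a = T m * toLaurent b) : ∃ i j : ℕ, X ^ i * a = X ^ j * b := by
  refine ⟨(-m).toNat, m.toNat, (toLaurent_inj _ _).mp ?_⟩
  rw [map_mul, map_mul, toLaurent_X_pow, toLaurent_X_pow, h, ← mul_assoc, ← T_add]
  congr 2
  omega

theorem exists_X_pow_mul_eq_C_mul_mul_reverse {a : R[X]} {c : R} {k : ℤ} {f : R[T;T⁻¹]}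
    (h : toLaurent a = C c * T k * f * invert f) :
    ∃ (p : R[X]) (i j : ℕ), X ^ i * a = X ^ j * (Polynomial.C c * (p * p.reverse)) := by
  obtain ⟨p, m, hm⟩ := exists_mul_invert_eq_T_mul_toLaurent f
  refine ⟨p, exists_X_pow_mul_eq_of_toLaurent_eq (m := k + m) ?_⟩
  rw [h, mul_assoc _ f, hm]
  simp only [map_mul, toLaurent_C, T_add]
  ring

end LaurentPolynomial

namespace Polynomial

theorem aeval_reverse_mul_conj_pow (p : ℤ[X]) {z : ℂ} (hz : ‖z‖ = 1) :
    aeval z p.reverse * conj z ^ p.natDegree = conj (aeval z p) := by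
  have hz0 : z ≠ 0 := by rintro rfl; simp at hz
  let : Invertible (conj z) :=
    ⟨z, by rw [← Complex.inv_eq_conj hz, mul_inv_cancel₀ hz0],
      by rw [← Complex.inv_eq_conj hz, inv_mul_cancel₀ hz0]⟩
  calc aeval z p.reverse * conj z ^ p.natDegree
      = eval₂ (algebraMap ℤ ℂ) (⅟(conj z)) p.reverse * conj z ^ p.natDegree := rfl
    _ = aeval (conj z) p := eval₂_reverse_mul_pow _ _ p
    _ = conj (aeval z p) := aeval_algHom_apply (starRingEnd ℂ).toIntAlgHom z p

theorem aeval_reverse_eq_zero_iff_of_norm_eq_one (p : ℤ[X]) {z : ℂ} (hz : ‖z‖ = 1) :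
    aeval z p.reverse = 0 ↔ aeval z p = 0 := by
  have hz0 : conj z ≠ 0 := by rintro h; simp_all
  calc aeval z p.reverse = 0 ↔ aeval z p.reverse * conj z ^ p.natDegree = 0 :=
        (mul_eq_zero_iff_right (pow_ne_zero _ hz0)).symm
    _ ↔ aeval z p = 0 := by rw [aeval_reverse_mul_conj_pow p hz, map_eq_zero]

end Polynomial

theorem sq_X_sub_C_dvd_map_of_toLaurent_eq_C_mul_T_mul_invert {a : ℤ[X]} {c k : ℤ}
    {f : ℤ[T;T⁻¹]} (hc : c ≠ 0) (h : toLaurent a = LaurentPolynomial.C c * T k * f * invert f)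
    {z : ℂ} (hz : ‖z‖ = 1) (ha : aeval z a = 0) : (X - C z) ^ 2 ∣ a.map (algebraMap ℤ ℂ) := by
  obtain ⟨p, i, j, hij⟩ := exists_X_pow_mul_eq_C_mul_mul_reverse h
  have hz0 : z ≠ 0 := by rintro rfl; simp at hz
  have hp : aeval z p = 0 := by
    have := congrArg (aeval z) hij
    simpa [ha, hz0, hc, aeval_reverse_eq_zero_iff_of_norm_eq_one p hz] using this
  have hdvd : (X - C z) ^ 2 ∣ (X ^ i * a).map (algebraMap ℤ ℂ) := by
    rw [hij, pow_two, Polynomial.map_mul, Polynomial.map_mul, Polynomial.map_mul]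
    refine dvd_mul_of_dvd_right (dvd_mul_of_dvd_right (mul_dvd_mul ?_ ?_) _) _ <;>
      rw [dvd_iff_isRoot, IsRoot, eval_map_algebraMap]
    exacts [hp, (aeval_reverse_eq_zero_iff_of_norm_eq_one p hz).mpr hp]
  rw [Polynomial.map_mul, Polynomial.map_pow, map_X] at hdvd
  have hcop : IsCoprime (X - C z) (X - C 0) :=
    isCoprime_X_sub_C_of_isUnit_sub (by simpa using hz0)
  rw [map_zero, sub_zero] at hcop
  exact hcop.pow.dvd_of_dvd_mul_left hdvd

noncomputable def alexanderT35 : ℤ[X] := X ^ 8 - X ^ 7 + X ^ 5 - X ^ 4 + X ^ 3 - X + 1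

theorem alexanderT35_mul :
    alexanderT35 * (X ^ 7 + X ^ 6 + X ^ 5 - X ^ 2 - X - 1) = X ^ 15 - 1 := by
  rw [alexanderT35]; ring

theorem exists_aeval_alexanderT35_eq_zero : ∃ z : ℂ, aeval z alexanderT35 = 0 :=
  have hdeg : alexanderT35.degree = 8 := by rw [alexanderT35]; compute_degree!
  IsAlgClosed.exists_aeval_eq_zero ℂ _ (by rw [hdeg]; decide)

theorem pow_fifteen_eq_one_of_aeval_alexanderT35 {z : ℂ} (hz : aeval z alexanderT35 = 0) :
    z ^ 15 = 1 := by
  have := congrArg (aeval z) alexanderT35_mul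
  simp only [map_mul, hz, zero_mul, map_sub, map_pow, aeval_X, map_one] at this
  exact sub_eq_zero.mp this.symm

theorem aeval_two_mul_X_sq_sub_five_mul_X_add_two_ne_zero {z : ℂ} (hz : ‖z‖ = 1) :
    aeval z (2 * X ^ 2 - 5 * X + 2 : ℤ[X]) ≠ 0 := by
  intro h
  have : (2 * z - 1) * (z - 2) = 0 := by
    simp only [map_sub, map_add, map_mul, map_pow, aeval_X, map_ofNat] at h
    linear_combination h
  rcases mul_eq_zero.mp this with h | h
  · rw [show z = 1 / 2 by linear_combination h / 2] at hz; norm_num at hz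
  · rw [show z = 2 by linear_combination h] at hz; norm_num at hz

theorem not_sq_X_sub_C_dvd_map_alexanderT35_mul {a : ℤ[X]} {z : ℂ} (ha : aeval z a ≠ 0) :
    ¬ (X - C z) ^ 2 ∣ (alexanderT35 * a).map (algebraMap ℤ ℂ) := by
  intro h
  have hsep : Squarefree (X ^ 15 - C 1 : ℂ[X]) :=
    (separable_X_pow_sub_C 1 (by norm_num) one_ne_zero).squarefree
  have hcop : IsCoprime ((X - C z) ^ 2) (a.map (algebraMap ℤ ℂ)) := by
    refine IsCoprime.pow_left ((irreducible_X_sub_C z).coprime_iff_not_dvd.mpr ?_)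
    rwa [dvd_iff_isRoot, IsRoot, eval_map_algebraMap]
  have h' := h.mul_right ((X ^ 7 + X ^ 6 + X ^ 5 - X ^ 2 - X - 1 : ℤ[X]).map (algebraMap ℤ ℂ))
  rw [← Polynomial.map_mul, mul_right_comm, alexanderT35_mul, Polynomial.map_mul] at h'
  have := hsep (X - C z) (by simpa [pow_two] using hcop.dvd_of_dvd_mul_right h')
  exact not_isUnit_X_sub_C z this

theorem toLaurent_alexanderT35_mul :
    toLaurent (alexanderT35 * (2 * X ^ 2 - 5 * X + 2)) =
      (T 8 - T 7 + T 5 - T 4 + T 3 - T 1 + 1) * (2 * T 2 - 5 * T 1 + 2) := by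
  simp only [alexanderT35, map_mul, map_add, map_sub, map_one, map_ofNat, toLaurent_X_pow,
    toLaurent_X]
  norm_num

/-- The polynomial `Δ(t) = (t⁸ − t⁷ + t⁵ − t⁴ + t³ − t + 1)(2t² − 5t + 2)` does
not satisfy the Fox–Milnor condition: it is not of the form `± tᵏ f(t) f(t⁻¹)`
for any Laurent polynomial `f ∈ ℤ[t,t⁻¹]` and any `k ∈ ℤ`. -/
theorem stmt_19 :
    ¬ ∃ (f : LaurentPolynomial ℤ) (k : ℤ),
      (T 8 - T 7 + T 5 - T 4 + T 3 - T 1 + 1) * (2 * T 2 - 5 * T 1 + 2) =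
          T k * f * invert f ∨
      (T 8 - T 7 + T 5 - T 4 + T 3 - T 1 + 1) * (2 * T 2 - 5 * T 1 + 2) =
          -(T k * f * invert f) := by
  rintro ⟨f, k, h⟩
  obtain ⟨c, hc, hΔ⟩ : ∃ c : ℤ, c ≠ 0 ∧ toLaurent (alexanderT35 * (2 * X ^ 2 - 5 * X + 2)) =
      LaurentPolynomial.C c * T k * f * invert f := by
    rw [toLaurent_alexanderT35_mul]
    rcases h with h | h
    · exact ⟨1, one_ne_zero, by rw [h, map_one, one_mul]⟩
    · exact ⟨-1, by norm_num, by rw [h, map_neg, map_one]; ring⟩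
  obtain ⟨z, hz⟩ := exists_aeval_alexanderT35_eq_zero
  have hz1 : ‖z‖ = 1 :=
    Complex.norm_eq_one_of_pow_eq_one (pow_fifteen_eq_one_of_aeval_alexanderT35 hz) (by norm_num)
  exact not_sq_X_sub_C_dvd_map_alexanderT35_mul
    (aeval_two_mul_X_sq_sub_five_mul_X_add_two_ne_zero hz1)
    (sq_X_sub_C_dvd_map_of_toLaurent_eq_C_mul_T_mul_invert hc hΔ hz1 (by simp [hz]))
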